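/- With the hypotheses and notation of the transport construction: if sup(u) = b then sup(u_i) ≤ b for all i = 0,…,r. In particular, if u is a simple element (u ≼ δ) then every u_i is simple. -/

import Mathlib

namespace GarsideFormal

variable (G : Type*) [Group G]

/-- An atom of the submonoid `M`: a nontrivial element admitting no nontrivial
factorization inside `M`. -/
def IsMAtom (M : Submonoid G) (a : G) : Prop :=
  a ∈ M ∧ a ≠ 1 ∧ ∀ b ∈ M, ∀ c ∈ M, a = b * c → b = 1 ∨ c = 1

/-- A Garside monoid `M`, realized as a submonoid (positive cone) of its group of
fractions `G`, together with its Garside element `δ`, left gcd and left lcm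
operations (extended to `G`), and the cycling operation `cyc`. -/
structure Garside where
  M : Submonoid G
  δ : G
  gcd : G → G → G
  lcm : G → G → G
  cyc : G → G
  δ_mem : δ ∈ M
  /-- `G` is the group of fractions of `M`. -/
  fractions : ∀ g : G, ∃ a ∈ M, ∃ b ∈ M, g = a⁻¹ * b
  /-- `M` is generated by its atoms. -/
  atoms_generate : Submonoid.closure {a : G | IsMAtom G M a} = M
  /-- Atomicity: bounded factorization lengths into atoms. -/
  atomic_bound : ∀ a ∈ M, ∃ N : ℕ, ∀ L : List G,
      (∀ b ∈ L, IsMAtom G M b) → L.prod = a → L.length ≤ N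
  /-- Left divisors of `δ` coincide with right divisors of `δ`. -/
  divs_eq : {x : G | x ∈ M ∧ x⁻¹ * δ ∈ M} = {x : G | x ∈ M ∧ δ * x⁻¹ ∈ M}
  divs_finite : Set.Finite {x : G | x ∈ M ∧ x⁻¹ * δ ∈ M}
  divs_generate : Submonoid.closure {x : G | x ∈ M ∧ x⁻¹ * δ ∈ M} = M
  gcd_dvd_left : ∀ a b : G, (gcd a b)⁻¹ * a ∈ M
  gcd_dvd_right : ∀ a b : G, (gcd a b)⁻¹ * b ∈ M
  gcd_greatest : ∀ a b x : G, x⁻¹ * a ∈ M → x⁻¹ * b ∈ M → x⁻¹ * gcd a b ∈ M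
  lcm_dvd_left : ∀ a b : G, a⁻¹ * lcm a b ∈ M
  lcm_dvd_right : ∀ a b : G, b⁻¹ * lcm a b ∈ M
  lcm_least : ∀ a b x : G, a⁻¹ * x ∈ M → b⁻¹ * x ∈ M → (lcm a b)⁻¹ * x ∈ M
  /-- Cycling: if `k = inf x` then `cyc x = x ^ (τ⁻ᵏ A₁)` where `A₁ = δ ∧ δ⁻ᵏ x`
  is the first factor of the left normal form of `x` (when `len x = 0` this
  gcd is `1` and `cyc x = x`). -/
  cyc_spec : ∀ (x : G) (k : ℤ),
      ((δ ^ k)⁻¹ * x ∈ M ∧ ∀ j : ℤ, (δ ^ j)⁻¹ * x ∈ M → j ≤ k) →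
      cyc x = (δ ^ k * gcd δ ((δ ^ k)⁻¹ * x) * (δ ^ k)⁻¹)⁻¹ * x *
              (δ ^ k * gcd δ ((δ ^ k)⁻¹ * x) * (δ ^ k)⁻¹)

variable {G}

namespace Garside

variable (S : Garside G)

/-- Left divisibility `a ≼ b`. -/
def dvd (a b : G) : Prop := a⁻¹ * b ∈ S.M

/-- Simple elements: the (left) divisors of `δ` in `M`. -/
def Simple (a : G) : Prop := a ∈ S.M ∧ a⁻¹ * S.δ ∈ S.M

/-- `k` is the infimum of `x`: maximal with `δ^k ≼ x`. -/
def IsInf (x : G) (k : ℤ) : Prop :=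
  (S.δ ^ k)⁻¹ * x ∈ S.M ∧ ∀ j : ℤ, (S.δ ^ j)⁻¹ * x ∈ S.M → j ≤ k

/-- `s` is the supremum of `x`: minimal with `x ≼ δ^s`. -/
def IsSup (x : G) (s : ℤ) : Prop :=
  x⁻¹ * S.δ ^ s ∈ S.M ∧ ∀ j : ℤ, x⁻¹ * S.δ ^ j ∈ S.M → s ≤ j

/-- `y` lies in the super summit set of `x`: `y` is conjugate to `x`, with
maximal infimum and minimal supremum among all conjugates of `x`. -/
def InSS (x y : G) : Prop :=
  IsConj x y ∧
  (∃ k : ℤ, S.IsInf y k ∧ ∀ z : G, IsConj x z → ∀ k' : ℤ, S.IsInf z k' → k' ≤ k) ∧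
  (∃ s : ℤ, S.IsSup y s ∧ ∀ z : G, IsConj x z → ∀ s' : ℤ, S.IsSup z s' → s ≤ s')

/-- `y` lies in the ultra summit set of `x`: it is in the super summit set and
periodic under cycling. -/
def InUS (x y : G) : Prop :=
  S.InSS x y ∧ ∃ n : ℕ, 0 < n ∧ S.cyc^[n] y = y

/-- `τ^k(z) = δ⁻ᵏ z δᵏ`, where `τ : z ↦ δ⁻¹zδ`. -/
def tauPow (k : ℤ) (z : G) : G := (S.δ ^ k)⁻¹ * z * S.δ ^ k

end Garside

/-- The ordered product `A (i+1) * A (i+2) * ⋯ * A r`. -/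
def prodSeg (A : ℕ → G) (i r : ℕ) : G :=
  ((List.range (r - i)).map (fun j => A (i + 1 + j))).prod

namespace Garside

variable (S : Garside G)

/-- `x` has left normal form `δ^k A₁ ⋯ A_r`: each `Aᵢ` is a nontrivial simple
element and `(Aᵢ⁻¹ δ) ∧ A_{i+1} = 1`. -/
def IsNormalForm (x : G) (k : ℤ) (r : ℕ) (A : ℕ → G) : Prop :=
  x = S.δ ^ k * prodSeg A 0 r ∧
  (∀ i, 1 ≤ i → i ≤ r → S.Simple (A i) ∧ A i ≠ 1) ∧
  (∀ i, 1 ≤ i → i < r → S.gcd ((A i)⁻¹ * S.δ) (A (i + 1)) = 1)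

/-- The sequence `u₀, …, u_r` of the transport construction for `(x, u)`,
where `x` has normal form `δ^k A₁ ⋯ A_r`:
`u₀ = τᵏ(u)`, `u_r = u`, and `uᵢ = (A_{i+1} ⋯ A_r u) ∧ δ·τ(Aᵢ⁻¹ u_{i-1})`. -/
def IsTransportSeq (k : ℤ) (r : ℕ) (A : ℕ → G) (u : G) (useq : ℕ → G) : Prop :=
  useq 0 = S.tauPow k u ∧ useq r = u ∧
  ∀ i, 1 ≤ i → i ≤ r →
    useq i = S.gcd (prodSeg A i r * u) (S.δ * S.tauPow 1 ((A i)⁻¹ * useq (i - 1)))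

/-- The transport `φ_x(u) = τ⁻ᵏ(u₁) = τ⁻ᵏ(A₁⁻¹ · τᵏ(u) · (δ ∧ δ⁻ᵏ(x^u)))`,
where `k = inf x` and `A₁ = δ ∧ δ⁻ᵏ x`. -/
def transp (k : ℤ) (x u : G) : G :=
  S.δ ^ k *
    ((S.gcd S.δ ((S.δ ^ k)⁻¹ * x))⁻¹ * S.tauPow k u *
      S.gcd S.δ ((S.δ ^ k)⁻¹ * (u⁻¹ * x * u))) * (S.δ ^ k)⁻¹

end Garside

section Auxiliary

lemma prodSeg_last (A : ℕ → G) (r : ℕ) : prodSeg A r r = 1 := by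
  simp [prodSeg]

lemma prodSeg_succ (A : ℕ → G) (i r : ℕ) (h : i < r) :
    prodSeg A i r = A (i + 1) * prodSeg A (i + 1) r := by
  have h1 : r - i = (r - (i + 1)) + 1 := by omega
  rw [prodSeg, prodSeg, h1, List.range_succ_eq_map, List.map_cons, List.prod_cons,
    List.map_map]
  have hfun : ((fun j => A (i + 1 + j)) ∘ Nat.succ) = (fun j => A ((i + 1) + 1 + j)) := by
    funext j
    simp only [Function.comp_apply]
    congr 1
    omega
  rw [hfun]

end Auxiliary

namespace Garside

variable (S : Garside G)

/-- The monoid `M` has no nontrivial invertible elements. -/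
lemma no_inv (a : G) (ha : a ∈ S.M) (ha' : a⁻¹ ∈ S.M) : a = 1 := by
  by_contra hne
  obtain ⟨N, hN⟩ := S.atomic_bound a ha
  have ha2 := ha; rw [← S.atoms_generate] at ha2
  have ha2' := ha'; rw [← S.atoms_generate] at ha2'
  obtain ⟨La, hLa, hpa⟩ := Submonoid.exists_list_of_mem_closure ha2
  obtain ⟨Lb, hLb, hpb⟩ := Submonoid.exists_list_of_mem_closure ha2'
  set L : List G := La ++ (List.replicate N (Lb ++ La)).flatten with hL
  have hatoms : ∀ b ∈ L, IsMAtom G S.M b := by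
    intro b hb
    simp only [hL, List.mem_append, List.mem_flatten, List.mem_replicate] at hb
    rcases hb with h | ⟨l, ⟨-, rfl⟩, h⟩
    · exact hLa b h
    · rcases List.mem_append.mp h with h | h
      exacts [hLb b h, hLa b h]
  have hprod : L.prod = a := by
    have h1 : ((List.replicate N (Lb ++ La)).flatten).prod = 1 := by
      rw [List.prod_flatten, List.map_replicate, List.prod_replicate, List.prod_append,
        hpb, hpa, inv_mul_cancel, one_pow]
    rw [hL, List.prod_append, h1, hpa, mul_one]
  have hLa_ne : La ≠ [] := by
    rintro rfl
    simp only [List.prod_nil] at hpa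
    exact hne hpa.symm
  have h1 : 1 ≤ La.length := List.length_pos_iff.mpr hLa_ne
  have h2 : L.length = La.length + N * ((Lb ++ La).length) := by
    simp [hL, List.length_flatten, List.map_replicate, List.sum_replicate, smul_eq_mul]
  have h3 : N ≤ N * ((Lb ++ La).length) := by
    apply Nat.le_mul_of_pos_right
    simp only [List.length_append]
    omega
  have := hN L hatoms hprod
  omega

/-- `τ` maps `M` into `M`. -/
lemma tau_mem : ∀ a ∈ S.M, S.δ⁻¹ * a * S.δ ∈ S.M := by
  have key : ∀ a ∈ Submonoid.closure {x : G | x ∈ S.M ∧ x⁻¹ * S.δ ∈ S.M},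
      S.δ⁻¹ * a * S.δ ∈ S.M := by
    intro a ha
    induction ha using Submonoid.closure_induction with
    | mem z hz =>
        have hc : z⁻¹ * S.δ ∈ {x : G | x ∈ S.M ∧ S.δ * x⁻¹ ∈ S.M} := by
          refine ⟨hz.2, ?_⟩
          have h : S.δ * (z⁻¹ * S.δ)⁻¹ = z := by group
          rw [h]; exact hz.1
        rw [← S.divs_eq] at hc
        have he : S.δ⁻¹ * z * S.δ = (z⁻¹ * S.δ)⁻¹ * S.δ := by group
        rw [he]; exact hc.2
    | one => simpa using S.M.one_mem
    | mul p q hp hq ihp ihq =>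
        have he : S.δ⁻¹ * (p * q) * S.δ = (S.δ⁻¹ * p * S.δ) * (S.δ⁻¹ * q * S.δ) := by group
        rw [he]; exact mul_mem ihp ihq
  intro a ha
  exact key a (by rw [S.divs_generate]; exact ha)

/-- `τ⁻¹` maps `M` into `M`. -/
lemma tau_inv_mem : ∀ a ∈ S.M, S.δ * a * S.δ⁻¹ ∈ S.M := by
  have key : ∀ a ∈ Submonoid.closure {x : G | x ∈ S.M ∧ x⁻¹ * S.δ ∈ S.M},
      S.δ * a * S.δ⁻¹ ∈ S.M := by
    intro a ha
    induction ha using Submonoid.closure_induction with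
    | mem z hz =>
        have hz' : z ∈ {x : G | x ∈ S.M ∧ S.δ * x⁻¹ ∈ S.M} := by
          rw [← S.divs_eq]; exact hz
        have hm : S.δ * z⁻¹ ∈ {x : G | x ∈ S.M ∧ x⁻¹ * S.δ ∈ S.M} := by
          refine ⟨hz'.2, ?_⟩
          have h : (S.δ * z⁻¹)⁻¹ * S.δ = z := by group
          rw [h]; exact hz.1
        rw [S.divs_eq] at hm
        have he : S.δ * z * S.δ⁻¹ = S.δ * (S.δ * z⁻¹)⁻¹ := by group
        rw [he]; exact hm.2
    | one => simpa using S.M.one_mem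
    | mul p q hp hq ihp ihq =>
        have he : S.δ * (p * q) * S.δ⁻¹ = (S.δ * p * S.δ⁻¹) * (S.δ * q * S.δ⁻¹) := by group
        rw [he]; exact mul_mem ihp ihq
  intro a ha
  exact key a (by rw [S.divs_generate]; exact ha)

/-- Conjugation by any power of `δ` maps `M` into `M`. -/
lemma tauPow_mem (k : ℤ) (a : G) (ha : a ∈ S.M) : (S.δ ^ k)⁻¹ * a * S.δ ^ k ∈ S.M := by
  induction k using Int.induction_on with
  | zero => simpa using ha
  | succ n ih =>
      have he : (S.δ ^ ((n : ℤ) + 1))⁻¹ * a * S.δ ^ ((n : ℤ) + 1)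
          = S.δ⁻¹ * ((S.δ ^ (n : ℤ))⁻¹ * a * S.δ ^ (n : ℤ)) * S.δ := by group
      rw [he]; exact S.tau_mem _ ih
  | pred n ih =>
      have he : (S.δ ^ (-(n : ℤ) - 1))⁻¹ * a * S.δ ^ (-(n : ℤ) - 1)
          = S.δ * ((S.δ ^ (-(n : ℤ)))⁻¹ * a * S.δ ^ (-(n : ℤ))) * S.δ⁻¹ := by group
      rw [he]; exact S.tau_inv_mem _ ih

lemma zpow_nonneg_mem (j : ℤ) (hj : 0 ≤ j) : S.δ ^ j ∈ S.M := by
  lift j to ℕ using hj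
  rw [zpow_natCast]
  exact pow_mem S.δ_mem j

lemma prodSeg_mem (A : ℕ → G) (i r : ℕ) (hA : ∀ j, i + 1 ≤ j → j ≤ r → A j ∈ S.M) :
    prodSeg A i r ∈ S.M := by
  apply Submonoid.list_prod_mem
  intro y hy
  simp only [prodSeg, List.mem_map, List.mem_range] at hy
  obtain ⟨j, hj, rfl⟩ := hy
  exact hA _ (by omega) (by omega)

/-- Left-weightedness of the tail: any element of `M` dividing both `δ` and
`A (i+1) ⋯ A r` divides `A (i+1)`. -/
lemma keyN (A : ℕ → G) (r : ℕ)
    (hA : ∀ i, 1 ≤ i → i ≤ r → S.Simple (A i))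
    (hW : ∀ i, 1 ≤ i → i < r → S.gcd ((A i)⁻¹ * S.δ) (A (i + 1)) = 1) :
    ∀ m i, i < r → r - i = m + 1 →
      ∀ e, e ∈ S.M → e⁻¹ * S.δ ∈ S.M → e⁻¹ * prodSeg A i r ∈ S.M →
        e⁻¹ * A (i + 1) ∈ S.M := by
  intro m
  induction m with
  | zero =>
      intro i hi hri e _ _ h2
      have hr' : r = i + 1 := by omega
      subst hr'
      rw [prodSeg_succ A i (i + 1) hi, prodSeg_last, mul_one] at h2
      exact h2
  | succ m ih =>
      intro i hi hri e he h1 h2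
      have hi1 : i + 1 < r := by omega
      have hQmem : prodSeg A (i + 1) r ∈ S.M :=
        S.prodSeg_mem A (i + 1) r (fun j hj1 hj2 => (hA j (by omega) hj2).1)
      have hA1 : S.Simple (A (i + 1)) := hA (i + 1) (by omega) (by omega)
      set g := S.gcd S.δ (A (i + 1) * prodSeg A (i + 1) r) with hg
      have h2' : e⁻¹ * (A (i + 1) * prodSeg A (i + 1) r) ∈ S.M := by
        rw [← prodSeg_succ A i r hi]; exact h2
      have heg : e⁻¹ * g ∈ S.M := S.gcd_greatest _ _ _ h1 h2'
      have hag : (A (i + 1))⁻¹ * g ∈ S.M := by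
        apply S.gcd_greatest _ _ _ hA1.2
        have h : (A (i + 1))⁻¹ * (A (i + 1) * prodSeg A (i + 1) r) = prodSeg A (i + 1) r := by
          group
        rw [h]; exact hQmem
      set d := (A (i + 1))⁻¹ * g with hd
      have hd1 : d⁻¹ * ((A (i + 1))⁻¹ * S.δ) ∈ S.M := by
        have h : d⁻¹ * ((A (i + 1))⁻¹ * S.δ) = g⁻¹ * S.δ := by rw [hd]; group
        rw [h]; exact S.gcd_dvd_left _ _
      have hd2 : d⁻¹ * prodSeg A (i + 1) r ∈ S.M := by
        have h : d⁻¹ * prodSeg A (i + 1) r = g⁻¹ * (A (i + 1) * prodSeg A (i + 1) r) := by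
          rw [hd]; group
        rw [h]; exact S.gcd_dvd_right _ _
      have hdδ : d⁻¹ * S.δ ∈ S.M := by
        have h : d⁻¹ * S.δ = (d⁻¹ * ((A (i + 1))⁻¹ * S.δ)) * (S.δ⁻¹ * A (i + 1) * S.δ) := by
          group
        rw [h]; exact mul_mem hd1 (S.tau_mem _ hA1.1)
      have hdA2 : d⁻¹ * A (i + 1 + 1) ∈ S.M := ih (i + 1) hi1 (by omega) d hag hdδ hd2
      have hgcd1 : d⁻¹ * S.gcd ((A (i + 1))⁻¹ * S.δ) (A (i + 1 + 1)) ∈ S.M :=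
        S.gcd_greatest _ _ _ hd1 hdA2
      rw [hW (i + 1) (by omega) hi1] at hgcd1
      have hdinv : d⁻¹ ∈ S.M := by simpa using hgcd1
      have hd_one : d = 1 := S.no_inv d hag hdinv
      rw [hd, inv_mul_eq_one] at hd_one
      rw [← hd_one] at heg
      exact heg

/-- The key lemma: only `1` divides both `A i⁻¹ δ` and `A (i+1) ⋯ A r`. -/
lemma keyKL (A : ℕ → G) (r : ℕ)
    (hA : ∀ i, 1 ≤ i → i ≤ r → S.Simple (A i))
    (hW : ∀ i, 1 ≤ i → i < r → S.gcd ((A i)⁻¹ * S.δ) (A (i + 1)) = 1) :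
    ∀ i, 1 ≤ i → i ≤ r → ∀ e, e ∈ S.M →
      e⁻¹ * ((A i)⁻¹ * S.δ) ∈ S.M → e⁻¹ * prodSeg A i r ∈ S.M → e = 1 := by
  intro i h1 h2 e he hd1 hd2
  rcases eq_or_lt_of_le h2 with rfl | hlt
  · rw [prodSeg_last] at hd2
    exact S.no_inv e he (by simpa using hd2)
  · have hAi := hA i h1 (by omega)
    have heδ : e⁻¹ * S.δ ∈ S.M := by
      have h : e⁻¹ * S.δ = (e⁻¹ * ((A i)⁻¹ * S.δ)) * (S.δ⁻¹ * A i * S.δ) := by group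
      rw [h]; exact mul_mem hd1 (S.tau_mem _ hAi.1)
    have hri : r - i = (r - i - 1) + 1 := by omega
    have hN := S.keyN A r hA hW (r - i - 1) i hlt hri e he heδ hd2
    have hg := S.gcd_greatest _ _ _ hd1 hN
    rw [hW i h1 hlt] at hg
    exact S.no_inv e he (by simpa using hg)

end Garside

/-- In the transport construction, if `sup u = b` then `sup uᵢ ≤ b` (i.e.
`uᵢ ≼ δ^b`) for all `i`; in particular if `u` is simple then so is every `uᵢ`. -/
theorem transport_seq_sup_le {G : Type*} [Group G] (S : Garside G)
    (x u : G) (k : ℤ) (r : ℕ) (A : ℕ → G)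
    (hr : 1 ≤ r) (hnf : S.IsNormalForm x k r A) (hx : S.InSS x x)
    (hu : u ∈ S.M) (hxu : S.InSS x (u⁻¹ * x * u))
    (useq : ℕ → G) (hus : S.IsTransportSeq k r A u useq)
    (b : ℤ) (hb : S.IsSup u b) :
    (∀ i, i ≤ r → (useq i)⁻¹ * S.δ ^ b ∈ S.M) ∧
    (u⁻¹ * S.δ ∈ S.M → ∀ i, i ≤ r → (useq i)⁻¹ * S.δ ∈ S.M) := by
  obtain ⟨hx_eq, hAsimple, hW⟩ := hnf
  obtain ⟨hu0, hur, hrec⟩ := hus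
  have hA' : ∀ i, 1 ≤ i → i ≤ r → S.Simple (A i) := fun i h1 h2 => (hAsimple i h1 h2).1
  have main : ∀ i, i ≤ r → (useq i)⁻¹ * S.δ ^ b ∈ S.M := by
    intro i
    induction i with
    | zero =>
        intro _
        rw [hu0]
        have he : (S.tauPow k u)⁻¹ * S.δ ^ b = (S.δ ^ k)⁻¹ * (u⁻¹ * S.δ ^ b) * S.δ ^ k := by
          simp only [Garside.tauPow]; group
        rw [he]
        exact S.tauPow_mem k _ hb.1
    | succ i ihi =>
        intro hir
        have hi1 : 1 ≤ i + 1 := by omega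
        have hv : (useq i)⁻¹ * S.δ ^ b ∈ S.M := ihi (by omega)
        have hrec' := hrec (i + 1) hi1 hir
        simp only [Nat.add_sub_cancel] at hrec'
        have harg : S.δ * S.tauPow 1 ((A (i + 1))⁻¹ * useq i) = (A (i + 1))⁻¹ * useq i * S.δ := by
          simp only [Garside.tauPow]; group
        rw [harg] at hrec'
        set P := prodSeg A (i + 1) r with hP
        set g := useq (i + 1) with hgdef
        have hg1 : g⁻¹ * (P * S.δ ^ b) ∈ S.M := by
          have h := S.gcd_dvd_left (P * u) ((A (i + 1))⁻¹ * useq i * S.δ)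
          rw [← hrec'] at h
          have he : g⁻¹ * (P * S.δ ^ b) = (g⁻¹ * (P * u)) * (u⁻¹ * S.δ ^ b) := by group
          rw [he]; exact mul_mem h hb.1
        have hg2 : g⁻¹ * ((A (i + 1))⁻¹ * S.δ ^ (b + 1)) ∈ S.M := by
          have h := S.gcd_dvd_right (P * u) ((A (i + 1))⁻¹ * useq i * S.δ)
          rw [← hrec'] at h
          have he : g⁻¹ * ((A (i + 1))⁻¹ * S.δ ^ (b + 1)) =
              (g⁻¹ * ((A (i + 1))⁻¹ * useq i * S.δ)) *
                (S.δ⁻¹ * ((useq i)⁻¹ * S.δ ^ b) * S.δ) := by group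
          rw [he]; exact mul_mem h (S.tau_mem _ hv)
        set G2 := S.gcd (P * S.δ ^ b) ((A (i + 1))⁻¹ * S.δ ^ (b + 1)) with hG2
        have hgG2 : g⁻¹ * G2 ∈ S.M := S.gcd_greatest _ _ _ hg1 hg2
        have hPmem : P ∈ S.M :=
          S.prodSeg_mem A (i + 1) r (fun j hj1 hj2 => (hA' j (by omega) hj2).1)
        have hAi := hA' (i + 1) hi1 hir
        have hδG2 : (S.δ ^ b)⁻¹ * G2 ∈ S.M := by
          apply S.gcd_greatest
          · have he : (S.δ ^ b)⁻¹ * (P * S.δ ^ b) = (S.δ ^ b)⁻¹ * P * S.δ ^ b := by group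
            rw [he]; exact S.tauPow_mem b _ hPmem
          · have he : (S.δ ^ b)⁻¹ * ((A (i + 1))⁻¹ * S.δ ^ (b + 1)) =
                (S.δ ^ b)⁻¹ * ((A (i + 1))⁻¹ * S.δ) * S.δ ^ b := by group
            rw [he]; exact S.tauPow_mem b _ hAi.2
        set e := G2 * (S.δ ^ b)⁻¹ with he_def
        have he_mem : e ∈ S.M := by
          have heq : e = (S.δ ^ (-b))⁻¹ * ((S.δ ^ b)⁻¹ * G2) * S.δ ^ (-b) := by
            rw [he_def]; group
          rw [heq]; exact S.tauPow_mem (-b) _ hδG2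
        have he1 : e⁻¹ * ((A (i + 1))⁻¹ * S.δ) ∈ S.M := by
          have heq : e⁻¹ * ((A (i + 1))⁻¹ * S.δ) =
              (S.δ ^ (-b))⁻¹ * (G2⁻¹ * ((A (i + 1))⁻¹ * S.δ ^ (b + 1))) * S.δ ^ (-b) := by
            rw [he_def]; group
          rw [heq]; exact S.tauPow_mem (-b) _ (S.gcd_dvd_right _ _)
        have he2 : e⁻¹ * P ∈ S.M := by
          have heq : e⁻¹ * P = (S.δ ^ (-b))⁻¹ * (G2⁻¹ * (P * S.δ ^ b)) * S.δ ^ (-b) := by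
            rw [he_def]; group
          rw [heq]; exact S.tauPow_mem (-b) _ (S.gcd_dvd_left _ _)
        have he_one : e = 1 :=
          S.keyKL A r hA' hW (i + 1) hi1 hir e he_mem he1 he2
        rw [he_def, mul_inv_eq_one] at he_one
        rw [he_one] at hgG2
        exact hgG2
  refine ⟨main, ?_⟩
  intro hu1 i hir
  have hb1 : b ≤ 1 := hb.2 1 (by rw [zpow_one]; exact hu1)
  have h := main i hir
  have hpow : S.δ ^ b * S.δ ^ (1 - b) = S.δ := by
    rw [← zpow_add]
    norm_num
  have he : (useq i)⁻¹ * S.δ = ((useq i)⁻¹ * S.δ ^ b) * S.δ ^ (1 - b) := by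
    rw [mul_assoc, hpow]
  rw [he]
  exact mul_mem h (S.zpow_nonneg_mem _ (by omega))

end GarsideFormal
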